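/- Boundary of the staircase path: for 1 ≤ a < b ≤ n and m ≥ 1, ∂ stc^m_1(a,b) = (a,...,a) + (b,...,b), i.e., the boundary of the stair convex 1-chain is the sum of the two diagonal endpoint vertices. -/

import Mathlib

/-- A cell of a grid complex `G[n]^m`: a list of `m` factors, each either a
vertex `{a}` (encoded `(a, false)`) or a unit interval `[a, a+1]` (encoded `(a, true)`). -/
abbrev GCell := List (ℕ × Bool)

/-- Cellular chains with `ℤ/2` coefficients. -/
abbrev GChain := GCell →₀ ZMod 2

/-- Product of chains, induced by concatenation of cells. -/
noncomputable def prodC (α β : GChain) : GChain :=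
  α.sum fun c x => β.sum fun d y => Finsupp.single (c ++ d) (x * y)

/-- The vertex `{a}` of `G[n]`, as a chain. -/
noncomputable def vtx (a : ℕ) : GChain := Finsupp.single [(a, false)] 1

/-- The unit interval `[a, a+1]` of `G[n]`, as a chain. -/
noncomputable def seg (a : ℕ) : GChain := Finsupp.single [(a, true)] 1

/-- The 1-chain `[a,b] = [a,a+1] + ... + [b-1,b]` (symmetrized so `[b,a] = [a,b]`). -/
noncomputable def intervalC (a b : ℕ) : GChain :=
  ∑ j ∈ Finset.Ico (min a b) (max a b), seg j

/-- The diagonal vertex `(a, ..., a)` of `G[n]^m`. -/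
noncomputable def diag (m a : ℕ) : GChain := Finsupp.single (List.replicate m (a, false)) 1

/-- Stair convex chains, with the list of parameters in *reverse* (decreasing) order. -/
noncomputable def stcR : ℕ → List ℕ → GChain
  | 0, [_] => Finsupp.single [] 1
  | 0, _ => 0
  | _ + 1, [] => 0
  | m + 1, [a] => prodC (stcR m [a]) (vtx a)
  | m + 1, b :: c :: rest =>
      prodC (stcR m (c :: rest)) (intervalC c b) + prodC (stcR m (b :: c :: rest)) (vtx b)

/-- The stair convex chain `stc^m_k (a₁, ..., a_{k+1})` where the parameters are
given as the (increasing) list `l = [a₁, ..., a_{k+1}]` with `k = l.length - 1`. -/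
noncomputable def stc (m : ℕ) (l : List ℕ) : GChain := stcR m l.reverse

/-- Boundary of a cell, via the product rule `∂(σ×τ) = ∂σ×τ + σ×∂τ`,
`∂{a} = 0`, `∂[a,a+1] = {a} + {a+1}`. -/
noncomputable def bndCell : GCell → GChain
  | [] => 0
  | (a, false) :: rest => prodC (vtx a) (bndCell rest)
  | (a, true) :: rest =>
      prodC (vtx a + vtx (a + 1)) (Finsupp.single rest 1) + prodC (seg a) (bndCell rest)

/-- The boundary operator on chains, extended linearly. -/
noncomputable def bnd (α : GChain) : GChain := α.sum fun c x => x • bndCell c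

/-- Ordered product of a list of chains. -/
noncomputable def bigProd (l : List GChain) : GChain := l.foldr prodC (Finsupp.single [] 1)

/-- `c` is a cell of the grid complex `G[n]^m`. -/
def isCellOf (m n : ℕ) (c : GCell) : Prop :=
  c.length = m ∧ ∀ e ∈ c, 1 ≤ e.1 ∧ (if e.2 then e.1 + 1 else e.1) ≤ n

/-- Dimension of a cell: the number of interval factors. -/
def dimCell (c : GCell) : ℕ := (c.filter fun e => e.2).length

/-! Cellular chains form the monoid algebra of the free monoid on the factors `{a}`, `[a, a+1]`,
so `×` is associative and bilinear and `∂` obeys the Leibniz rule (without signs over `ℤ/2`).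
Since `∂(a,…,a) = 0` and `∂[a,b] = {a} + {b}`, induction on `m` gives
`∂ stc^{m+1}_1(a,b) = (a,…,a) × ({a} + {b}) + ((a,…,a) + (b,…,b)) × {b}`,
where the mixed term `(a,…,a) × {b}` occurs twice and cancels. -/

abbrev CellAlgebra := MonoidAlgebra (ZMod 2) (FreeMonoid (ℕ × Bool))

noncomputable def toCellAlgebra : GChain ≃ₗ[ZMod 2] CellAlgebra :=
  (MonoidAlgebra.coeffLinearEquiv (ZMod 2)).symm

lemma toCellAlgebra_prodC (α β : GChain) :
    toCellAlgebra (prodC α β) = toCellAlgebra α * toCellAlgebra β := by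
  rw [MonoidAlgebra.mul_def, prodC, map_finsuppSum]
  refine Finsupp.sum_congr fun c _ => ?_
  rw [map_finsuppSum]
  rfl

section Product

variable (α α' β β' γ : GChain) (x : ZMod 2)

lemma prodC_add_left : prodC (α + α') β = prodC α β + prodC α' β :=
  toCellAlgebra.injective <| by simp only [toCellAlgebra_prodC, map_add, add_mul]

lemma prodC_add_right : prodC α (β + β') = prodC α β + prodC α β' :=
  toCellAlgebra.injective <| by simp only [toCellAlgebra_prodC, map_add, mul_add]

lemma prodC_zero_left : prodC 0 β = 0 :=
  toCellAlgebra.injective <| by simp only [toCellAlgebra_prodC, map_zero, zero_mul]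

lemma prodC_zero_right : prodC α 0 = 0 :=
  toCellAlgebra.injective <| by simp only [toCellAlgebra_prodC, map_zero, mul_zero]

lemma prodC_smul_left : prodC (x • α) β = x • prodC α β :=
  toCellAlgebra.injective <| by simp only [toCellAlgebra_prodC, map_smul, smul_mul_assoc]

lemma prodC_smul_right : prodC α (x • β) = x • prodC α β :=
  toCellAlgebra.injective <| by simp only [toCellAlgebra_prodC, map_smul, mul_smul_comm]

lemma prodC_assoc : prodC (prodC α β) γ = prodC α (prodC β γ) :=
  toCellAlgebra.injective <| by simp only [toCellAlgebra_prodC, mul_assoc]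

lemma prodC_nil_left : prodC (Finsupp.single [] 1) β = β :=
  toCellAlgebra.injective <| by rw [toCellAlgebra_prodC]; exact one_mul _

lemma prodC_nil_right : prodC α (Finsupp.single [] 1) = α :=
  toCellAlgebra.injective <| by rw [toCellAlgebra_prodC]; exact mul_one _

end Product

lemma prodC_single_single (c d : GCell) (x y : ZMod 2) :
    prodC (Finsupp.single c x) (Finsupp.single d y) = Finsupp.single (c ++ d) (x * y) :=
  toCellAlgebra.injective <| by
    rw [toCellAlgebra_prodC]
    exact MonoidAlgebra.single_mul_single (FreeMonoid.ofList c) (FreeMonoid.ofList d) x y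

lemma single_append_one (c d : GCell) :
    (Finsupp.single (c ++ d) 1 : GChain) = prodC (Finsupp.single c 1) (Finsupp.single d 1) := by
  rw [prodC_single_single, one_mul]

lemma single_cons_one (e : ℕ × Bool) (c : GCell) :
    (Finsupp.single (e :: c) 1 : GChain) = prodC (Finsupp.single [e] 1) (Finsupp.single c 1) :=
  single_append_one [e] c

lemma bnd_zero : bnd 0 = 0 := Finsupp.sum_zero_index

lemma bnd_add (α β : GChain) : bnd (α + β) = bnd α + bnd β :=
  Finsupp.sum_add_index' (fun _ => zero_smul _ _) fun _ b₁ b₂ => add_smul b₁ b₂ _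

lemma bnd_single (c : GCell) (x : ZMod 2) : bnd (Finsupp.single c x) = x • bndCell c :=
  Finsupp.sum_single_index (zero_smul _ _)

lemma bndCell_append (c d : GCell) :
    bndCell (c ++ d) =
      prodC (bndCell c) (Finsupp.single d 1) + prodC (Finsupp.single c 1) (bndCell d) := by
  induction c with
  | nil => rw [List.nil_append, bndCell, prodC_zero_left, prodC_nil_left, zero_add]
  | cons e c ih =>
    obtain ⟨a, _ | _⟩ := e
    · rw [List.cons_append, bndCell, bndCell, ih, single_cons_one, vtx]
      simp only [prodC_add_right, prodC_assoc]
    · rw [List.cons_append, bndCell, bndCell, ih, single_append_one c d, single_cons_one, seg]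
      simp only [prodC_add_left, prodC_add_right, prodC_assoc, add_assoc]

lemma bnd_prodC (α β : GChain) : bnd (prodC α β) = prodC (bnd α) β + prodC α (bnd β) := by
  induction α using Finsupp.induction_linear with
  | zero => rw [prodC_zero_left, bnd_zero, prodC_zero_left, prodC_zero_left, zero_add]
  | add α α' hα hα' =>
    rw [prodC_add_left, bnd_add, bnd_add, hα, hα', prodC_add_left, prodC_add_left]
    abel
  | single c x =>
    induction β using Finsupp.induction_linear with
    | zero => rw [prodC_zero_right, bnd_zero, prodC_zero_right, prodC_zero_right, add_zero]
    | add β β' hβ hβ' =>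
      rw [prodC_add_right, bnd_add, bnd_add, hβ, hβ', prodC_add_right, prodC_add_right]
      abel
    | single d y =>
      rw [prodC_single_single, bnd_single, bnd_single, bnd_single, bndCell_append,
        ← Finsupp.smul_single_one c x, ← Finsupp.smul_single_one d y, prodC_smul_left,
        prodC_smul_right, prodC_smul_left, prodC_smul_right, smul_add, mul_smul, mul_comm,
        mul_smul, smul_comm y x]

lemma bnd_vtx (a : ℕ) : bnd (vtx a) = 0 := by
  rw [vtx, bnd_single, one_smul, bndCell, bndCell, prodC_zero_right]

lemma bnd_seg (a : ℕ) : bnd (seg a) = vtx a + vtx (a + 1) := by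
  rw [seg, bnd_single, one_smul, bndCell, bndCell, prodC_nil_right, prodC_zero_right, add_zero]

lemma bnd_sum_seg_Ico {a b : ℕ} (hab : a ≤ b) :
    bnd (∑ j ∈ Finset.Ico a b, seg j) = vtx a + vtx b := by
  induction b, hab using Nat.le_induction with
  | base => rw [Finset.Ico_self, Finset.sum_empty, bnd_zero, ZModModule.add_self]
  | succ b hab ih =>
    rw [Finset.sum_Ico_succ_top hab, bnd_add, ih, bnd_seg, ZModModule.add_add_add_cancel]

lemma bnd_intervalC (a b : ℕ) : bnd (intervalC a b) = vtx a + vtx b := by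
  rcases le_total a b with hab | hba
  · rw [intervalC, min_eq_left hab, max_eq_right hab, bnd_sum_seg_Ico hab]
  · rw [intervalC, min_eq_right hba, max_eq_left hba, bnd_sum_seg_Ico hba, add_comm]

lemma diag_succ (m a : ℕ) : diag (m + 1) a = prodC (diag m a) (vtx a) := by
  rw [diag, diag, vtx, prodC_single_single, one_mul, List.replicate_succ']

lemma bnd_diag (m a : ℕ) : bnd (diag m a) = 0 := by
  induction m with
  | zero => rw [diag, bnd_single, one_smul, List.replicate_zero, bndCell]
  | succ m ih => rw [diag_succ, bnd_prodC, ih, bnd_vtx, prodC_zero_left, prodC_zero_right, add_zero]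

lemma stcR_singleton (m a : ℕ) : stcR m [a] = diag m a := by
  induction m with
  | zero => rfl
  | succ m ih => rw [stcR, ih, diag_succ]

lemma stc_succ_pair (m a b : ℕ) :
    stc (m + 1) [a, b] = prodC (diag m a) (intervalC a b) + prodC (stc m [a, b]) (vtx b) := by
  rw [← stcR_singleton]
  rfl

theorem stmt19_general (m a b : ℕ) :
    bnd (stc m [a, b]) = diag m a + diag m b := by
  induction m with
  | zero =>
    rw [show stc 0 [a, b] = 0 from rfl, bnd_zero, show diag 0 b = diag 0 a from rfl,
      ZModModule.add_self]
  | succ m ih =>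
    rw [stc_succ_pair, bnd_add, bnd_prodC, bnd_prodC, bnd_diag, bnd_intervalC, bnd_vtx, ih,
      prodC_zero_left, prodC_zero_right, zero_add, add_zero, prodC_add_right, prodC_add_left,
      ← diag_succ, ← diag_succ, ZModModule.add_add_add_cancel]

/-- Boundary of the staircase path: for `1 ≤ a < b ≤ n` and `m ≥ 1`,
`∂ stc^m_1(a,b) = (a,...,a) + (b,...,b)`, the sum of the two diagonal endpoints. -/
theorem stmt19 (n m a b : ℕ) (hm : 1 ≤ m) (h1 : 1 ≤ a) (hab : a < b) (hn : b ≤ n) :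
    bnd (stc m [a, b]) = diag m a + diag m b :=
  stmt19_general m a b
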